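/- arXiv:2307.13151 — 2 statements merged into one kernel-verified Lean document; each statement's English description precedes it below -/
import Mathlib

section
/- For every θ ∈ Θ with |θ| ≤ ν₀/(2 L_a) and every v ∈ V₀, one has ‖𝒩_θ v − N_θ v‖₀ ≤ κ₂ |θ|² ‖v‖₀, where κ₂ = ν₀⁻¹ (2 L_a² ν₀⁻¹ + K_{a′}). -/
noncomputable section

open scoped Classical

/-- An abstract family of non-negative bounded sesquilinear forms `a θ`, `b θ`
(linear in the first argument, conjugate-linear in the second) on a complex Hilbert
space `H`, parametrised by `θ` in a compact subset `Θ` of `ℝⁿ`, such that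
`(·,·)_θ := a θ + b θ` is a family of inner products whose norms are equivalent
to the norm of `H`. -/
structure FormFamily (n : ℕ) (H : Type*) [NormedAddCommGroup H] [InnerProductSpace ℂ H]
    [CompleteSpace H] where
  Θ : Set (EuclideanSpace ℝ (Fin n))
  compactΘ : IsCompact Θ
  a : EuclideanSpace ℝ (Fin n) → H → H → ℂ
  b : EuclideanSpace ℝ (Fin n) → H → H → ℂ
  a_addL : ∀ θ ∈ Θ, ∀ u v w : H, a θ (u + v) w = a θ u w + a θ v w
  a_smulL : ∀ θ ∈ Θ, ∀ (c : ℂ) (u w : H), a θ (c • u) w = c * a θ u w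
  a_addR : ∀ θ ∈ Θ, ∀ u v w : H, a θ u (v + w) = a θ u v + a θ u w
  a_smulR : ∀ θ ∈ Θ, ∀ (c : ℂ) (u w : H), a θ u (c • w) = starRingEnd ℂ c * a θ u w
  a_nonneg : ∀ θ ∈ Θ, ∀ u : H, 0 ≤ (a θ u u).re
  a_im : ∀ θ ∈ Θ, ∀ u : H, (a θ u u).im = 0
  a_bdd : ∀ θ ∈ Θ, ∃ C : ℝ, ∀ u w : H, ‖a θ u w‖ ≤ C * ‖u‖ * ‖w‖
  b_addL : ∀ θ ∈ Θ, ∀ u v w : H, b θ (u + v) w = b θ u w + b θ v w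
  b_smulL : ∀ θ ∈ Θ, ∀ (c : ℂ) (u w : H), b θ (c • u) w = c * b θ u w
  b_addR : ∀ θ ∈ Θ, ∀ u v w : H, b θ u (v + w) = b θ u v + b θ u w
  b_smulR : ∀ θ ∈ Θ, ∀ (c : ℂ) (u w : H), b θ u (c • w) = starRingEnd ℂ c * b θ u w
  b_nonneg : ∀ θ ∈ Θ, ∀ u : H, 0 ≤ (b θ u u).re
  b_im : ∀ θ ∈ Θ, ∀ u : H, (b θ u u).im = 0
  b_bdd : ∀ θ ∈ Θ, ∃ C : ℝ, ∀ u w : H, ‖b θ u w‖ ≤ C * ‖u‖ * ‖w‖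
  equivNorm : ∀ θ ∈ Θ, ∃ c₁ c₂ : ℝ, 0 < c₁ ∧ ∀ u : H,
    c₁ * ‖u‖ ^ 2 ≤ (a θ u u).re + (b θ u u).re ∧
      (a θ u u).re + (b θ u u).re ≤ c₂ * ‖u‖ ^ 2

namespace FormFamily

variable {n : ℕ} {H : Type*} [NormedAddCommGroup H] [InnerProductSpace ℂ H] [CompleteSpace H]

/-- The inner product `(u, w)_θ := a θ u w + b θ u w`. -/
def ip (S : FormFamily n H) (θ : EuclideanSpace ℝ (Fin n)) (u w : H) : ℂ :=
  S.a θ u w + S.b θ u w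

/-- The squared `θ`-norm `‖u‖_θ ^ 2 = (u, u)_θ`. -/
def nsq (S : FormFamily n H) (θ : EuclideanSpace ℝ (Fin n)) (u : H) : ℝ :=
  (S.ip θ u u).re

/-- The `θ`-norm `‖u‖_θ`. -/
def nrm (S : FormFamily n H) (θ : EuclideanSpace ℝ (Fin n)) (u : H) : ℝ :=
  Real.sqrt (S.nsq θ u)

/-- The degeneracy subspace `V_θ = {v : a_θ[v] = 0}`. -/
def V (S : FormFamily n H) (θ : EuclideanSpace ℝ (Fin n)) : Set H :=
  {v : H | S.a θ v v = 0}

/-- `W_θ`, the orthogonal complement of `V_θ` in `H` with respect to `(·,·)_θ`. -/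
def W (S : FormFamily n H) (θ : EuclideanSpace ℝ (Fin n)) : Set H :=
  {w : H | ∀ v ∈ S.V θ, S.ip θ w v = 0}

end FormFamily

/-- `f : H → ℂ` is a bounded conjugate-linear functional. -/
def IsBddConjLinear {H : Type*} [NormedAddCommGroup H] [InnerProductSpace ℂ H]
    (f : H → ℂ) : Prop :=
  (∀ u v : H, f (u + v) = f u + f v) ∧
    (∀ (c : ℂ) (u : H), f (c • u) = starRingEnd ℂ c * f u) ∧
    ∃ C : ℝ, ∀ u : H, ‖f u‖ ≤ C * ‖u‖

/-- The homogenised form `a^h_θ(v,vt) = a''₀(v,vt)θ·θ - a₀(N_θ v, N_θ vt)`. -/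
def ahom {n : ℕ} {H : Type*} [NormedAddCommGroup H] [InnerProductSpace ℂ H] [CompleteSpace H]
    (S : FormFamily n H) (a'' : H → H → Fin n → Fin n → ℂ)
    (N : EuclideanSpace ℝ (Fin n) → H → H) (θ : EuclideanSpace ℝ (Fin n)) (v vt : H) : ℂ :=
  (∑ j, ∑ k, a'' v vt j k * (θ j : ℂ) * (θ k : ℂ)) - S.a 0 (N θ v) (N θ vt)

/-!
Both correctors live in `W₀`, where `a₀` is coercive, so each is estimated by testing its
equation with an element of `W₀`. Testing the equation of `𝒩_θ v` with `𝒩_θ v` itself and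
using `a₀(v, ·) = 0` leaves only differences `a₀ - a_θ`, which are `O(|θ|)`; hence
`‖𝒩_θ v‖₀ = O(|θ|)`. Testing the difference of the two corrector equations with
`𝒩_θ v - N_θ v` leaves the difference `a₀ - a_θ` at `𝒩_θ v`, of order `|θ| · |θ|`, and the
remainder of the first-order expansion of `a_θ(v, ·)` from (H4), of order `|θ|²`.
-/

theorem mul_le_of_mul_sq_le_mul {c x A : ℝ} (hx : 0 ≤ x) (hA : 0 ≤ A)
    (h : c * x ^ 2 ≤ A * x) : c * x ≤ A := by
  rcases hx.eq_or_lt with rfl | hx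
  · simpa using hA
  · exact le_of_mul_le_mul_right (by nlinarith) hx

namespace FormFamily

variable {n : ℕ} {H : Type*} [NormedAddCommGroup H] [InnerProductSpace ℂ H] [CompleteSpace H]
  (S : FormFamily n H) {θ : EuclideanSpace ℝ (Fin n)}

theorem a_neg_left (hθ : θ ∈ S.Θ) (u w : H) : S.a θ (-u) w = -S.a θ u w := by
  simpa using S.a_smulL θ hθ (-1) u w

theorem b_neg_left (hθ : θ ∈ S.Θ) (u w : H) : S.b θ (-u) w = -S.b θ u w := by
  simpa using S.b_smulL θ hθ (-1) u w

theorem a_sub_left (hθ : θ ∈ S.Θ) (u v w : H) :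
    S.a θ (u - v) w = S.a θ u w - S.a θ v w := by
  rw [sub_eq_add_neg, S.a_addL θ hθ, S.a_neg_left hθ, sub_eq_add_neg]

theorem ip_sub_left (hθ : θ ∈ S.Θ) (u v w : H) :
    S.ip θ (u - v) w = S.ip θ u w - S.ip θ v w := by
  simp only [ip, sub_eq_add_neg, S.a_addL θ hθ, S.b_addL θ hθ, S.a_neg_left hθ,
    S.b_neg_left hθ]
  ring

theorem sub_mem_W (hθ : θ ∈ S.Θ) {u w : H} (hu : u ∈ S.W θ) (hw : w ∈ S.W θ) :
    u - w ∈ S.W θ := fun v hv => by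
  rw [S.ip_sub_left hθ, hu v hv, hw v hv, sub_zero]

theorem nsq_nonneg (hθ : θ ∈ S.Θ) (u : H) : 0 ≤ S.nsq θ u := by
  simpa only [nsq, ip, Complex.add_re] using add_nonneg (S.a_nonneg θ hθ u) (S.b_nonneg θ hθ u)

theorem nrm_sq (hθ : θ ∈ S.Θ) (u : H) : S.nrm θ u ^ 2 = S.nsq θ u :=
  Real.sq_sqrt (S.nsq_nonneg hθ u)

theorem nrm_nonneg (θ : EuclideanSpace ℝ (Fin n)) (u : H) : 0 ≤ S.nrm θ u :=
  Real.sqrt_nonneg _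

theorem mul_nrm_le_of_coercive (hθ : θ ∈ S.Θ) {ν A : ℝ} {w : H}
    (hcoer : ν * S.nsq θ w ≤ (S.a θ w w).re) (hA : 0 ≤ A)
    (hw : ‖S.a θ w w‖ ≤ A * S.nrm θ w) : ν * S.nrm θ w ≤ A :=
  mul_le_of_mul_sq_le_mul (S.nrm_nonneg θ w) hA <| by
    rw [S.nrm_sq hθ]
    linarith [Complex.re_le_norm (S.a θ w w)]

theorem mul_nrm_corrector_le (h0 : 0 ∈ S.Θ) {ν₀ δ : ℝ}
    (hgap : ∀ w ∈ S.W 0, ν₀ * S.nsq 0 w ≤ (S.a 0 w w).re)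
    (hclose : ∀ u w : H, ‖S.a 0 u w - S.a θ u w‖ ≤ δ * S.nrm 0 u * S.nrm 0 w)
    (hδ : 0 ≤ δ) (hδν : δ ≤ ν₀ / 2) {v c : H} (hv : ∀ u, S.a 0 v u = 0)
    (hc : c ∈ S.W 0) (hcorr : ∀ w ∈ S.W 0, S.a θ c w = -S.a θ v w) :
    ν₀ * S.nrm 0 c ≤ 2 * δ * S.nrm 0 v := by
  have hcc : S.a 0 c c = (S.a 0 c c - S.a θ c c) + (S.a 0 v c - S.a θ v c) := by
    rw [hcorr c hc, hv c]
    ring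
  have hbound : ‖S.a 0 c c‖ ≤ (δ * S.nrm 0 c + δ * S.nrm 0 v) * S.nrm 0 c := by
    rw [hcc]
    calc _ ≤ ‖S.a 0 c c - S.a θ c c‖ + ‖S.a 0 v c - S.a θ v c‖ := norm_add_le _ _
      _ ≤ δ * S.nrm 0 c * S.nrm 0 c + δ * S.nrm 0 v * S.nrm 0 c :=
        add_le_add (hclose c c) (hclose v c)
      _ = _ := by ring
  have hx := S.nrm_nonneg 0 c
  have := S.mul_nrm_le_of_coercive h0 (hgap c hc)
    (by positivity [S.nrm_nonneg 0 v]) hbound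
  nlinarith [mul_le_mul_of_nonneg_right hδν hx]

theorem mul_nrm_corrector_sub_le (h0 : 0 ∈ S.Θ) {ν₀ δ κ : ℝ}
    (hgap : ∀ w ∈ S.W 0, ν₀ * S.nsq 0 w ≤ (S.a 0 w w).re)
    (hclose : ∀ u w : H, ‖S.a 0 u w - S.a θ u w‖ ≤ δ * S.nrm 0 u * S.nrm 0 w)
    (hδ : 0 ≤ δ) {v c l : H} (ℓ : H → ℂ)
    (hc : c ∈ S.W 0) (hcorr : ∀ w ∈ S.W 0, S.a θ c w = -S.a θ v w)
    (hl : l ∈ S.W 0) (hlin : ∀ w ∈ S.W 0, S.a 0 l w = -ℓ w)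
    (hℓ : ∀ w, ‖S.a θ v w - ℓ w‖ ≤ κ * S.nrm 0 v * S.nrm 0 w) (hκ : 0 ≤ κ) :
    ν₀ * S.nrm 0 (c - l) ≤ δ * S.nrm 0 c + κ * S.nrm 0 v := by
  set d := c - l
  have hd : d ∈ S.W 0 := S.sub_mem_W h0 hc hl
  have hdd : S.a 0 d d = (S.a 0 c d - S.a θ c d) - (S.a θ v d - ℓ d) := by
    rw [S.a_sub_left h0, hcorr d hd, hlin d hd]
    ring
  have hbound : ‖S.a 0 d d‖ ≤ (δ * S.nrm 0 c + κ * S.nrm 0 v) * S.nrm 0 d := by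
    rw [hdd]
    calc _ ≤ ‖S.a 0 c d - S.a θ c d‖ + ‖S.a θ v d - ℓ d‖ := norm_sub_le _ _
      _ ≤ δ * S.nrm 0 c * S.nrm 0 d + κ * S.nrm 0 v * S.nrm 0 d :=
        add_le_add (hclose c d) (hℓ d)
      _ = _ := by ring
  exact S.mul_nrm_le_of_coercive h0 (hgap d hd)
    (by positivity [S.nrm_nonneg 0 c, S.nrm_nonneg 0 v]) hbound

theorem nrm_corrector_sub_le (h0 : 0 ∈ S.Θ) {ν₀ δ κ : ℝ} (hν₀ : 0 < ν₀)
    (hgap : ∀ w ∈ S.W 0, ν₀ * S.nsq 0 w ≤ (S.a 0 w w).re)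
    (hclose : ∀ u w : H, ‖S.a 0 u w - S.a θ u w‖ ≤ δ * S.nrm 0 u * S.nrm 0 w)
    (hδ : 0 ≤ δ) (hδν : δ ≤ ν₀ / 2) {v c l : H} (hv : ∀ u, S.a 0 v u = 0) (ℓ : H → ℂ)
    (hc : c ∈ S.W 0) (hcorr : ∀ w ∈ S.W 0, S.a θ c w = -S.a θ v w)
    (hl : l ∈ S.W 0) (hlin : ∀ w ∈ S.W 0, S.a 0 l w = -ℓ w)
    (hℓ : ∀ w, ‖S.a θ v w - ℓ w‖ ≤ κ * S.nrm 0 v * S.nrm 0 w) (hκ : 0 ≤ κ) :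
    S.nrm 0 (c - l) ≤ ν₀⁻¹ * (2 * δ ^ 2 * ν₀⁻¹ + κ) * S.nrm 0 v := by
  have hcv : S.nrm 0 c ≤ 2 * δ * S.nrm 0 v / ν₀ :=
    (le_div_iff₀' hν₀).2 (S.mul_nrm_corrector_le h0 hgap hclose hδ hδν hv hc hcorr)
  have hdiff := S.mul_nrm_corrector_sub_le h0 hgap hclose hδ ℓ hc hcorr hl hlin hℓ hκ
  calc S.nrm 0 (c - l) ≤ (δ * (2 * δ * S.nrm 0 v / ν₀) + κ * S.nrm 0 v) / ν₀ :=
        (le_div_iff₀' hν₀).2 (hdiff.trans (by gcongr))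
    _ = _ := by field_simp

end FormFamily

theorem statement10_general
    {n : ℕ} {H : Type*} [NormedAddCommGroup H] [InnerProductSpace ℂ H]
    [CompleteSpace H] (S : FormFamily n H)
    (La : ℝ) (hLa0 : 0 < La)
    (hLa : ∀ θ₁ ∈ S.Θ, ∀ θ₂ ∈ S.Θ, ∀ u w : H,
      ‖S.a θ₁ u w - S.a θ₂ u w‖ ≤ La * ‖θ₁ - θ₂‖ * S.nrm θ₁ u * S.nrm θ₁ w)
    (h0 : (0 : EuclideanSpace ℝ (Fin n)) ∈ S.Θ)
    (ν₀ : ℝ) (hν₀ : 0 < ν₀)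
    (hgap0 : ∀ w ∈ S.W 0, ν₀ * S.nsq 0 w ≤ (S.a 0 w w).re)
    (Ncal : EuclideanSpace ℝ (Fin n) → H → H)
    (hNcal : ∀ θ ∈ S.Θ, ‖θ‖ ≤ ν₀ / (2 * La) → ∀ v ∈ S.V 0,
      Ncal θ v ∈ S.W 0 ∧ ∀ w ∈ S.W 0, S.a θ (Ncal θ v) w = - S.a θ v w)
    (a' : H → H → Fin n → ℂ)
    (Ka' : ℝ) (hKa' : 0 ≤ Ka')
    (hH4a : ∀ θ ∈ S.Θ, ∀ v ∈ S.V 0, ∀ u : H,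
      ‖S.a θ v u - (∑ j, a' v u j * (θ j : ℂ))‖ ≤ Ka' * ‖θ‖ ^ 2 * S.nrm 0 v * S.nrm 0 u)
    (N : EuclideanSpace ℝ (Fin n) → H → H)
    (hN : ∀ (θ : EuclideanSpace ℝ (Fin n)), ∀ v ∈ S.V 0,
      N θ v ∈ S.W 0 ∧ ∀ w ∈ S.W 0, S.a 0 (N θ v) w = -(∑ j, a' v w j * (θ j : ℂ)))
 :
    ∀ θ ∈ S.Θ, ‖θ‖ ≤ ν₀ / (2 * La) → ∀ v ∈ S.V 0,
      S.nrm 0 (Ncal θ v - N θ v) ≤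
        ν₀⁻¹ * (2 * La ^ 2 * ν₀⁻¹ + Ka') * ‖θ‖ ^ 2 * S.nrm 0 v := by
  intro θ hθ hθν v hv
  obtain ⟨hc, hcorr⟩ := hNcal θ hθ hθν v hv
  obtain ⟨hl, hlin⟩ := hN θ v hv
  -- (H4) at `θ = 0`: the first-order term vanishes, so `a₀(v, ·) = 0`.
  have hv0 : ∀ u, S.a 0 v u = 0 := fun u => by simpa using hH4a 0 h0 v hv u
  have hclose : ∀ u w : H, ‖S.a 0 u w - S.a θ u w‖ ≤ La * ‖θ‖ * S.nrm 0 u * S.nrm 0 w := by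
    simpa using hLa 0 h0 θ hθ
  have hδν : La * ‖θ‖ ≤ ν₀ / 2 := by
    rw [le_div_iff₀ (by positivity : (0 : ℝ) < 2 * La)] at hθν
    linarith
  calc _ ≤ ν₀⁻¹ * (2 * (La * ‖θ‖) ^ 2 * ν₀⁻¹ + Ka' * ‖θ‖ ^ 2) * S.nrm 0 v :=
        S.nrm_corrector_sub_le h0 hν₀ hgap0 hclose (by positivity) hδν hv0
          (fun w => ∑ j, a' v w j * (θ j : ℂ)) hc hcorr hl hlin (hH4a θ hθ v hv) (by positivity)
    _ = _ := by ring

theorem statement10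
    {n : ℕ} (hn : 0 < n) {H : Type*} [NormedAddCommGroup H] [InnerProductSpace ℂ H]
    [CompleteSpace H] (S : FormFamily n H)
    (K : ℝ) (hK0 : 0 < K)
    (hK : ∀ θ₁ ∈ S.Θ, ∀ θ₂ ∈ S.Θ, ∀ u : H, S.nrm θ₁ u ≤ K * S.nrm θ₂ u)
    (La : ℝ) (hLa0 : 0 < La)
    (hLa : ∀ θ₁ ∈ S.Θ, ∀ θ₂ ∈ S.Θ, ∀ u w : H,
      ‖S.a θ₁ u w - S.a θ₂ u w‖ ≤ La * ‖θ₁ - θ₂‖ * S.nrm θ₁ u * S.nrm θ₁ w)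
    (h0 : (0 : EuclideanSpace ℝ (Fin n)) ∈ S.Θ)
    (ν₀ : ℝ) (hν₀ : 0 < ν₀)
    (hgap0 : ∀ w ∈ S.W 0, ν₀ * S.nsq 0 w ≤ (S.a 0 w w).re)
    (Ncal : EuclideanSpace ℝ (Fin n) → H → H)
    (hNcal : ∀ θ ∈ S.Θ, ‖θ‖ ≤ ν₀ / (2 * La) → ∀ v ∈ S.V 0,
      Ncal θ v ∈ S.W 0 ∧ ∀ w ∈ S.W 0, S.a θ (Ncal θ v) w = - S.a θ v w)
    (hint : (0 : EuclideanSpace ℝ (Fin n)) ∈ interior S.Θ)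
    (a' : H → H → Fin n → ℂ) (a'' : H → H → Fin n → Fin n → ℂ)
    (Ka' : ℝ) (hKa' : 0 ≤ Ka') (Ka'' : ℝ) (hKa'' : 0 ≤ Ka'')
    (hH4a : ∀ θ ∈ S.Θ, ∀ v ∈ S.V 0, ∀ u : H,
      ‖S.a θ v u - (∑ j, a' v u j * (θ j : ℂ))‖ ≤ Ka' * ‖θ‖ ^ 2 * S.nrm 0 v * S.nrm 0 u)
    (hH4b : ∀ θ ∈ S.Θ, ∀ v ∈ S.V 0, ∀ vt ∈ S.V 0,
      ‖S.a θ v vt - (∑ j, ∑ k, a'' v vt j k * (θ j : ℂ) * (θ k : ℂ))‖ ≤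
        Ka'' * ‖θ‖ ^ 3 * S.nrm 0 v * S.nrm 0 vt)
    (N : EuclideanSpace ℝ (Fin n) → H → H)
    (hN : ∀ (θ : EuclideanSpace ℝ (Fin n)), ∀ v ∈ S.V 0,
      N θ v ∈ S.W 0 ∧ ∀ w ∈ S.W 0, S.a 0 (N θ v) w = -(∑ j, a' v w j * (θ j : ℂ)))
 :
    ∀ θ ∈ S.Θ, ‖θ‖ ≤ ν₀ / (2 * La) → ∀ v ∈ S.V 0,
      S.nrm 0 (Ncal θ v - N θ v) ≤
        ν₀⁻¹ * (2 * La ^ 2 * ν₀⁻¹ + Ka') * ‖θ‖ ^ 2 * S.nrm 0 v :=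
  statement10_general S La hLa0 hLa h0 ν₀ hν₀ hgap0 Ncal hNcal a' Ka' hKa' hH4a N hN
end
end

section
/- There exists a closed subspace Z of 𝒱 such that: (i) 𝒱 = V_⋆ ∔ Z, a closed direct sum (every element of 𝒱 is uniquely v_⋆ + z with v_⋆ ∈ V_⋆ and z ∈ Z); (ii) |(v_⋆, z)| ≤ M_d ‖v_⋆‖ ‖z‖ for all v_⋆ ∈ V_⋆ and z ∈ Z; and (iii) (z, v_⋆) = d(z, v_⋆) for all z ∈ Z and v_⋆ ∈ V_⋆. -/
/-!
Let `T` be the operator representing `d`, i.e. `⟪T u, w⟫ = d u w`; Cauchy–Schwarz for the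
semidefinite form `d` gives `‖T‖ ≤ M_d < 1`. Take `Z = {z | (1 - T) z ⊥ V⋆}`, which is closed and
satisfies (iii) by construction, while (ii) is Cauchy–Schwarz for `d` again. Splitting `x = v + z`
amounts to solving `P (1 - T) v = P (1 - T) x` for `v ∈ V⋆`, where `P` is the orthogonal projection
onto `V⋆`; the compression `P (1 - T)|V⋆ = 1 - P T|V⋆` is invertible by a Neumann series.
-/
noncomputable section

open RCLike

theorem PreInnerProductSpace.Core.norm_inner_le_of_re_inner_self_le {𝕜 V : Type*} [RCLike 𝕜]
    [SeminormedAddCommGroup V] [Module 𝕜 V] (c : PreInnerProductSpace.Core 𝕜 V) {M : ℝ}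
    (hM : ∀ u, re (c.inner u u) ≤ M * ‖u‖ ^ 2) (u w : V) :
    ‖c.inner u w‖ ≤ M * ‖u‖ * ‖w‖ := by
  have hcs : ‖c.inner u w‖ ^ 2 ≤ re (c.inner u u) * re (c.inner w w) := by
    rw [sq]
    nth_rw 2 [← c.conj_inner_symm]
    rw [RCLike.norm_conj]
    exact @InnerProductSpace.Core.inner_mul_inner_self_le 𝕜 V _ _ _ c u w
  have hu := hM u
  have hw := hM w
  have hu0 := c.re_inner_nonneg u
  have hw0 := c.re_inner_nonneg w
  have hMuw : 0 ≤ M * ‖u‖ * ‖w‖ := by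
    rcases (norm_nonneg u).eq_or_lt with h | h
    · simp [← h]
    · have : 0 ≤ M := nonneg_of_mul_nonneg_left (hu0.trans hu) (pow_pos h 2)
      positivity
  refine nonneg_le_nonneg_of_sq_le_sq hMuw ?_
  nlinarith [mul_le_mul hu hw hw0 (hu0.trans hu)]

namespace InnerProductSpace

variable {𝕜 E : Type*} [RCLike 𝕜] [NormedAddCommGroup E] [InnerProductSpace 𝕜 E] [CompleteSpace E]

theorem norm_continuousLinearMapOfBilin_apply (B : E →L⋆[𝕜] E →L[𝕜] 𝕜) (v : E) :
    ‖continuousLinearMapOfBilin B v‖ = ‖B v‖ :=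
  (toDual 𝕜 E).symm.norm_map (B v)

theorem norm_continuousLinearMapOfBilin_le (B : E →L⋆[𝕜] E →L[𝕜] 𝕜) :
    ‖continuousLinearMapOfBilin B‖ ≤ ‖B‖ :=
  ContinuousLinearMap.opNorm_le_bound _ (norm_nonneg B) fun v => by
    rw [norm_continuousLinearMapOfBilin_apply]; exact B.le_opNorm v

end InnerProductSpace

namespace Submodule

variable {𝕜 E : Type*} [RCLike 𝕜] [NormedAddCommGroup E] [InnerProductSpace 𝕜 E]

theorem existsUnique_mem_mem_add_of_isCompl {R M : Type*} [Ring R] [AddCommGroup M] [Module R M]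
    {p q : Submodule R M} (h : IsCompl p q) (x : M) :
    ∃! u : M × M, u.1 ∈ p ∧ u.2 ∈ q ∧ x = u.1 + u.2 := by
  obtain ⟨a, b, hab, huniq⟩ := existsUnique_add_of_isCompl h x
  refine ⟨(a, b), ⟨a.2, b.2, hab.symm⟩, ?_⟩
  rintro ⟨y, z⟩ ⟨hy, hz, hx⟩
  obtain ⟨rfl, rfl⟩ := huniq ⟨y, hy⟩ ⟨z, hz⟩ hx.symm
  rfl

theorem mem_comap_one_sub_orthogonal_iff (K : Submodule 𝕜 E) (T : E →L[𝕜] E) (z : E) :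
    z ∈ Kᗮ.comap ((1 - T : E →L[𝕜] E) : E →ₗ[𝕜] E) ↔ ∀ v ∈ K, inner 𝕜 z v = inner 𝕜 (T z) v := by
  simp only [mem_comap, mem_orthogonal', ContinuousLinearMap.coe_coe, sub_apply,
    one_apply_eq_self, inner_sub_left, sub_eq_zero]

variable (K : Submodule 𝕜 E) [K.HasOrthogonalProjection]

def compression (T : E →L[𝕜] E) : K →L[𝕜] K :=
  K.orthogonalProjectionOnto ∘L T ∘L K.subtypeL

theorem compression_apply (T : E →L[𝕜] E) (v : K) :
    K.compression T v = K.orthogonalProjectionOnto (T v) := rfl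

theorem compression_one_sub (T : E →L[𝕜] E) : K.compression (1 - T) = 1 - K.compression T := by
  ext v
  simp [compression_apply]

theorem norm_compression_le (T : E →L[𝕜] E) : ‖K.compression T‖ ≤ ‖T‖ :=
  calc ‖K.compression T‖ ≤ ‖K.orthogonalProjectionOnto‖ * (‖T‖ * ‖K.subtypeL‖) :=
        (ContinuousLinearMap.opNorm_comp_le _ _).trans
          (by gcongr; exact ContinuousLinearMap.opNorm_comp_le _ _)
    _ ≤ 1 * (‖T‖ * 1) := by
        gcongr
        exacts [K.orthogonalProjectionOnto_norm_le, K.norm_subtypeL_le]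
    _ = ‖T‖ := by ring

theorem isCompl_comap_orthogonal {S : E →L[𝕜] E} (hS : Function.Bijective (K.compression S)) :
    IsCompl K (Kᗮ.comap (S : E →ₗ[𝕜] E)) := by
  have hmem : ∀ u, u ∈ Kᗮ.comap (S : E →ₗ[𝕜] E) ↔ K.orthogonalProjectionOnto (S u) = 0 := fun u =>
    orthogonalProjectionOnto_eq_zero_iff.symm
  constructor
  · refine disjoint_def.2 fun v hv hvZ => ?_
    have : K.compression S ⟨v, hv⟩ = 0 := (hmem v).1 hvZ
    simpa using hS.1 (this.trans (map_zero _).symm)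
  · refine codisjoint_iff_exists_add_eq.2 fun x => ?_
    obtain ⟨w, hw⟩ := hS.2 (K.orthogonalProjectionOnto (S x))
    refine ⟨w, x - w, w.2, (hmem _).2 ?_, add_sub_cancel _ _⟩
    rw [map_sub, map_sub, ← compression_apply, hw, sub_self]

theorem bijective_compression_one_sub [CompleteSpace K] {T : E →L[𝕜] E} (hT : ‖T‖ < 1) :
    Function.Bijective (K.compression (1 - T)) := by
  rw [compression_one_sub, ← ContinuousLinearMap.isUnit_iff_bijective]
  exact (Units.oneSub _ ((K.norm_compression_le T).trans_lt hT)).isUnit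

end Submodule

theorem statement19_general
    {V : Type*} [NormedAddCommGroup V] [InnerProductSpace ℂ V] [CompleteSpace V]
    (Vstar : Submodule ℂ V) (hVstar : IsClosed (Vstar : Set V))
    (d : V → V → ℂ)
    (d_addL : ∀ u v w : V, d (u + v) w = d u w + d v w)
    (d_smulL : ∀ (t : ℂ) (u w : V), d (t • u) w = starRingEnd ℂ t * d u w)
    (d_addR : ∀ u v w : V, d u (v + w) = d u v + d u w)
    (d_smulR : ∀ (t : ℂ) (u w : V), d u (t • w) = t * d u w)
    (d_herm : ∀ u w : V, d u w = starRingEnd ℂ (d w u))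
    (d_nonneg : ∀ u : V, 0 ≤ (d u u).re)
    (Md : ℝ) (hMd0 : 0 < Md) (hMd1 : Md < 1)
    (hdbd : ∀ u : V, (d u u).re ≤ Md * ‖u‖ ^ 2) :
    ∃ Z : Submodule ℂ V, IsClosed (Z : Set V) ∧
      (∀ x : V, ∃! p : V × V, p.1 ∈ Vstar ∧ p.2 ∈ Z ∧ x = p.1 + p.2) ∧
      (∀ v ∈ Vstar, ∀ z ∈ Z, ‖(inner ℂ v z : ℂ)‖ ≤ Md * ‖v‖ * ‖z‖) ∧
      ∀ z ∈ Z, ∀ v ∈ Vstar, (inner ℂ z v : ℂ) = d z v := by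
  let c : PreInnerProductSpace.Core ℂ V :=
    { inner := d
      conj_inner_symm := fun u w => (d_herm u w).symm
      re_inner_nonneg := d_nonneg
      add_left := d_addL
      smul_left := fun u w t => d_smulL t u w }
  have d_bound : ∀ u w, ‖d u w‖ ≤ Md * ‖u‖ * ‖w‖ := c.norm_inner_le_of_re_inner_self_le hdbd
  let D : V →L⋆[ℂ] V →L[ℂ] ℂ :=
    (LinearMap.mk₂'ₛₗ (starRingEnd ℂ) (RingHom.id ℂ) d d_addL d_smulL d_addR d_smulR).mkContinuous₂
      Md d_bound
  let T := InnerProductSpace.continuousLinearMapOfBilin D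
  have hT_norm : ‖T‖ < 1 := (InnerProductSpace.norm_continuousLinearMapOfBilin_le D).trans_lt
    ((LinearMap.mkContinuous₂_norm_le _ hMd0.le _).trans_lt hMd1)
  have hZ (z : V) : z ∈ Vstarᗮ.comap ((1 - T : V →L[ℂ] V) : V →ₗ[ℂ] V) ↔
      ∀ v ∈ Vstar, inner ℂ z v = d z v := by
    simp only [Submodule.mem_comap_one_sub_orthogonal_iff, T,
      InnerProductSpace.continuousLinearMapOfBilin_apply]
    rfl
  have : CompleteSpace Vstar := hVstar.completeSpace_coe
  refine ⟨_, Vstar.isClosed_orthogonal.preimage (1 - T).continuous,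
    Submodule.existsUnique_mem_mem_add_of_isCompl
      (Vstar.isCompl_comap_orthogonal (Vstar.bijective_compression_one_sub hT_norm)),
    fun v hv z hz => ?_, fun z hz => (hZ z).1 hz⟩
  rw [norm_inner_symm, (hZ z).1 hz v hv, mul_right_comm]
  exact d_bound z v

theorem statement19
    {V : Type*} [NormedAddCommGroup V] [InnerProductSpace ℂ V] [CompleteSpace V]
    (Vstar : Submodule ℂ V) (hVstar : IsClosed (Vstar : Set V))
    (d : V → V → ℂ)
    (d_addL : ∀ u v w : V, d (u + v) w = d u w + d v w)
    (d_smulL : ∀ (t : ℂ) (u w : V), d (t • u) w = starRingEnd ℂ t * d u w)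
    (d_addR : ∀ u v w : V, d u (v + w) = d u v + d u w)
    (d_smulR : ∀ (t : ℂ) (u w : V), d u (t • w) = t * d u w)
    (d_herm : ∀ u w : V, d u w = starRingEnd ℂ (d w u))
    (d_nonneg : ∀ u : V, 0 ≤ (d u u).re) (d_im : ∀ u : V, (d u u).im = 0)
    (Md : ℝ) (hMd0 : 0 < Md) (hMd1 : Md < 1)
    (hdbd : ∀ u : V, (d u u).re ≤ Md * ‖u‖ ^ 2) :
    ∃ Z : Submodule ℂ V, IsClosed (Z : Set V) ∧
      (∀ x : V, ∃! p : V × V, p.1 ∈ Vstar ∧ p.2 ∈ Z ∧ x = p.1 + p.2) ∧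
      (∀ v ∈ Vstar, ∀ z ∈ Z, ‖(inner ℂ v z : ℂ)‖ ≤ Md * ‖v‖ * ‖z‖) ∧
      ∀ z ∈ Z, ∀ v ∈ Vstar, (inner ℂ z v : ℂ) = d z v :=
  statement19_general Vstar hVstar d d_addL d_smulL d_addR d_smulR d_herm d_nonneg Md hMd0 hMd1 hdbd
end
end
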